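/- Suppose s ∈ [1/4,1] and s ∉ {1/4, 1/3, 1/2, 1}. Then the system (Xₛ, fₛ) is sharp: for every vector V ∈ ℝ², the set {p ∈ Xₛ : fₛ is defined at p and fₛ(p) = p + V} is a convex subset of ℝ². -/

import Mathlib

open Set

noncomputable section OctaPET

/-- Rotation by `π/2` about the origin in `ℝ²`. -/
def Jrot (p : ℝ × ℝ) : ℝ × ℝ := (-p.2, p.1)

/-- The closed parallelogram `F₁(s)` centered at the origin, spanned by `(2,0)` and `(2s,2s)`. -/
def F1 (s : ℝ) : Set (ℝ × ℝ) :=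
  {p | ∃ a b : ℝ, a ∈ Icc (-(1/2) : ℝ) (1/2) ∧ b ∈ Icc (-(1/2) : ℝ) (1/2) ∧
    p = a • ((2 : ℝ), (0 : ℝ)) + b • ((2*s : ℝ), (2*s : ℝ))}

/-- `F₂(s) = J(F₁(s))`. -/
def F2 (s : ℝ) : Set (ℝ × ℝ) := Jrot '' F1 s

/-- The lattice `L₁(s)`, generated by `(2,0)` and `(2s,−2s)`. -/
def L1 (s : ℝ) : AddSubgroup (ℝ × ℝ) :=
  AddSubgroup.closure {((2 : ℝ), (0 : ℝ)), ((2*s : ℝ), (-(2*s) : ℝ))}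

/-- The lattice `L₂(s)`, generated by `(0,2)` and `(2s,2s)`. -/
def L2 (s : ℝ) : AddSubgroup (ℝ × ℝ) :=
  AddSubgroup.closure {((0 : ℝ), (2 : ℝ)), ((2*s : ℝ), (2*s : ℝ))}

/-- The partial map `f′ₛ` as a relation: `step s p q` holds iff `f′ₛ` is defined at `p`
with value `q`.  For `p ∈ F_j(s)`, `f′ₛ(p) = p + V` where `V` is the *unique* vector of
`L_{3−j}(s)` with `p + V ∈ F_{3−j}(s)`. -/
def step (s : ℝ) (p q : ℝ × ℝ) : Prop :=
  (p ∈ F1 s ∧ (∃! V, V ∈ L2 s ∧ p + V ∈ F2 s) ∧ q - p ∈ L2 s ∧ q ∈ F2 s) ∨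
  (p ∈ F2 s ∧ (∃! V, V ∈ L1 s ∧ p + V ∈ F1 s) ∧ q - p ∈ L1 s ∧ q ∈ F1 s)

/-- The map `fₛ = (f′ₛ)²`, as a relation: `fRel s p q` holds iff `fₛ` is defined at `p`
with value `q`. -/
def fRel (s : ℝ) (p q : ℝ × ℝ) : Prop := ∃ r, step s p r ∧ step s r q

end OctaPET

/-!
For `p ∈ F₁` both steps of `fₛ = f′ₛ²` are translations by lattice vectors, and since `F₁`, `F₂`
are fundamental parallelograms of `L₁`, `L₂`, a step is defined exactly when it lands in the
interior `U₁` or `U₂` of the target. Hence the points moved by `V` through `F₂` form the union,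
over the decompositions `V = A + B` with `A ∈ L₂`, `B ∈ L₁`, of the convex sets
`F₁ ∩ (U₂ - A) ∩ (U₁ - V)`, together with pieces where one step is trivial.

Two decompositions realised by points of `F₁` differ by `W ∈ L₁ ∩ L₂`, whose coordinates are
integers of the form `2 s m` with `|2 s m| < 1 + 2 s`. For `s ∉ {1/4, 1/3, 1/2, 1}` this forces
`W = 0`, except for `W = (±3, ±3)` when `s = 3/8` or `s = 3/4`; then the two points sit at opposite
ends of `F₁`, and no common `V` moves both into `U₁`. So at most one piece is nonempty. When
`V ∈ L₂`, the same integrality makes the `L₁`-step trivial, and for `V = 0` the two remaining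
pieces `F₁ ∩ U₂` and `U₁ ∩ F₂` are glued along open segments.
-/

theorem Convex.union_of_openSegment_subset {E : Type*} [AddCommGroup E] [Module ℝ E]
    {C D : Set E} (hC : Convex ℝ C) (hD : Convex ℝ D)
    (h : ∀ x ∈ C, ∀ y ∈ D, openSegment ℝ x y ⊆ C ∪ D) : Convex ℝ (C ∪ D) := by
  rw [convex_iff_openSegment_subset]
  rintro x (hx | hx) y (hy | hy)
  · exact (convex_iff_openSegment_subset.1 hC hx hy).trans subset_union_left
  · exact h x hx y hy
  · rw [openSegment_symm]; exact h y hy x hx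
  · exact (convex_iff_openSegment_subset.1 hD hx hy).trans subset_union_right

theorem existsUnique_add_mem_and_iff {G : Type*} [AddCommGroup G] {L : AddSubgroup G}
    {F U : Set G} (hUF : U ⊆ F)
    (h_out : ∀ q ∈ F, q ∉ U → ∃ W ∈ L, W ≠ 0 ∧ q + W ∈ F)
    (h_in : ∀ q ∈ U, ∀ W ∈ L, q + W ∈ F → W = 0) {p q : G} :
    ((∃! V, V ∈ L ∧ p + V ∈ F) ∧ q - p ∈ L ∧ q ∈ F) ↔ q - p ∈ L ∧ q ∈ U := by
  constructor
  · rintro ⟨⟨V, -, hV⟩, hqp, hq⟩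
    refine ⟨hqp, by_contra fun hqU => ?_⟩
    obtain ⟨W, hW, hW0, hqW⟩ := h_out q hq hqU
    have h₁ := hV (q - p) ⟨hqp, by rwa [add_sub_cancel]⟩
    have h₂ := hV (q - p + W) ⟨L.add_mem hqp hW, by rwa [← add_assoc, add_sub_cancel]⟩
    exact hW0 (by simpa [h₁] using h₂)
  · rintro ⟨hqp, hq⟩
    refine ⟨⟨q - p, ⟨hqp, by rw [add_sub_cancel]; exact hUF hq⟩, fun V ⟨hV, hpV⟩ => ?_⟩,
      hqp, hUF hq⟩
    refine sub_eq_zero.1 (h_in q hq (V - (q - p)) (L.sub_mem hV hqp) ?_)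
    convert hpV using 1
    abel

theorem Int.eq_zero_of_neg_one_lt_of_lt_one {n : ℤ} (h₁ : -1 < (n : ℝ)) (h₂ : (n : ℝ) < 1) :
    n = 0 := by
  have : -1 < n := by exact_mod_cast h₁
  have : n < 1 := by exact_mod_cast h₂
  omega

theorem exists_int_add_two_mul_mem_Icc (c : ℝ) : ∃ k : ℤ, -1 ≤ c + 2 * k ∧ c + 2 * k ≤ 1 :=
  ⟨⌊(1 - c) / 2⌋, by linarith [Int.lt_floor_add_one ((1 - c) / 2)],
    by linarith [Int.floor_le ((1 - c) / 2)]⟩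

/- `F₁(s)` and `F₂(s)` are boxes `box φ ψ s`, and `L₁(s)`, `L₂(s)` are lattices `ℤ f + ℤ e` with
`φ e = 2 s`, `φ f = 0`, `ψ f = 2`, for which the box is a fundamental domain. -/
section Box

variable {E : Type*} [AddCommGroup E] [Module ℝ E] (φ ψ : E →ₗ[ℝ] ℝ) (w : ℝ)

def box : Set E := φ ⁻¹' Icc (-w) w ∩ ψ ⁻¹' Icc (-1) 1

def openBox : Set E := φ ⁻¹' Ioo (-w) w ∩ ψ ⁻¹' Ioo (-1) 1

variable {φ ψ w}

@[simp]
theorem mem_box {p : E} : p ∈ box φ ψ w ↔ (-w ≤ φ p ∧ φ p ≤ w) ∧ -1 ≤ ψ p ∧ ψ p ≤ 1 := Iff.rfl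

@[simp]
theorem mem_openBox {p : E} :
    p ∈ openBox φ ψ w ↔ (-w < φ p ∧ φ p < w) ∧ -1 < ψ p ∧ ψ p < 1 := Iff.rfl

theorem openBox_subset_box : openBox φ ψ w ⊆ box φ ψ w :=
  inter_subset_inter (preimage_mono Ioo_subset_Icc_self) (preimage_mono Ioo_subset_Icc_self)

theorem convex_box : Convex ℝ (box φ ψ w) :=
  ((convex_Icc _ _).linear_preimage φ).inter ((convex_Icc _ _).linear_preimage ψ)

theorem convex_openBox : Convex ℝ (openBox φ ψ w) :=
  ((convex_Ioo _ _).linear_preimage φ).inter ((convex_Ioo _ _).linear_preimage ψ)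

theorem openSegment_subset_openBox {x y : E} (hx : x ∈ box φ ψ w) (hy : y ∈ openBox φ ψ w) :
    openSegment ℝ x y ⊆ openBox φ ψ w := by
  rintro _ ⟨a, b, ha, hb, hab, rfl⟩
  simp only [mem_box, mem_openBox, map_add, map_smul, smul_eq_mul] at hx hy ⊢
  obtain ⟨⟨h₁, h₂⟩, h₃, h₄⟩ := hx
  obtain ⟨⟨h₅, h₆⟩, h₇, h₈⟩ := hy
  refine ⟨⟨?_, ?_⟩, ?_, ?_⟩ <;> nlinarith

variable {e f : E}

theorem eq_zero_of_mem_openBox_of_add_mem_box (he : φ e = 2 * w) (hf : φ f = 0)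
    (hψf : ψ f = 2) {q W : E} (hq : q ∈ openBox φ ψ w)
    (hW : W ∈ AddSubgroup.closure {f, e}) (hqW : q + W ∈ box φ ψ w) : W = 0 := by
  obtain ⟨m, n, rfl⟩ := AddSubgroup.mem_closure_pair.1 hW
  simp only [mem_box, mem_openBox, map_add, map_zsmul, he, hf, hψf, zsmul_eq_mul] at hq hqW
  obtain rfl : n = 0 := Int.eq_zero_of_neg_one_lt_of_lt_one (by nlinarith) (by nlinarith)
  simp only [Int.cast_zero, zero_mul, add_zero] at hqW
  obtain rfl : m = 0 := Int.eq_zero_of_neg_one_lt_of_lt_one (by linarith) (by linarith)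
  simp

theorem exists_ne_zero_add_mem_box (hw : 0 < w) (he : φ e = 2 * w) (hf : φ f = 0)
    (hψf : ψ f = 2) {q : E} (hq : q ∈ box φ ψ w) (hq' : q ∉ openBox φ ψ w) :
    ∃ W ∈ AddSubgroup.closure {f, e}, W ≠ 0 ∧ q + W ∈ box φ ψ w := by
  have hfL : f ∈ AddSubgroup.closure {f, e} := AddSubgroup.subset_closure (by simp)
  have heL : e ∈ AddSubgroup.closure {f, e} := AddSubgroup.subset_closure (by simp)
  have ne_zero {W : E} (h : φ W ≠ 0 ∨ ψ W ≠ 0) : W ≠ 0 := by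
    rintro rfl; simp at h
  simp only [mem_box, mem_openBox] at hq hq'
  obtain ⟨⟨h₁, h₂⟩, h₃, h₄⟩ := hq
  rcases h₂.eq_or_lt with h₂ | h₂
  · obtain ⟨k, hk₁, hk₂⟩ := exists_int_add_two_mul_mem_Icc (ψ q - ψ e)
    have hφ : φ (k • f - e) = -(2 * w) := by simp [he, hf]
    have hψ : ψ (k • f - e) = 2 * k - ψ e := by simp [hψf, mul_comm]
    refine ⟨k • f - e, sub_mem (zsmul_mem hfL k) heL, ne_zero (.inl (by linarith)), ?_⟩
    simp only [mem_box, map_add, hφ, hψ]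
    constructor <;> constructor <;> linarith
  rcases h₁.eq_or_lt with h₁ | h₁
  · obtain ⟨k, hk₁, hk₂⟩ := exists_int_add_two_mul_mem_Icc (ψ q + ψ e)
    have hφ : φ (k • f + e) = 2 * w := by simp [he, hf]
    have hψ : ψ (k • f + e) = 2 * k + ψ e := by simp [hψf, mul_comm]
    refine ⟨k • f + e, add_mem (zsmul_mem hfL k) heL, ne_zero (.inl (by linarith)), ?_⟩
    simp only [mem_box, map_add, hφ, hψ]
    constructor <;> constructor <;> linarith
  rcases h₄.eq_or_lt with h₄ | h₄
  · refine ⟨-f, neg_mem hfL, ne_zero (.inr (by simp [hψf])), ?_⟩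
    simp only [mem_box, map_add, map_neg, hf, hψf]
    constructor <;> constructor <;> linarith
  rcases h₃.eq_or_lt with h₃ | h₃
  · refine ⟨f, hfL, ne_zero (.inr (by simp [hψf])), ?_⟩
    simp only [mem_box, map_add, hf, hψf]
    constructor <;> constructor <;> linarith
  exact absurd ⟨⟨h₁, h₂⟩, h₃, h₄⟩ hq'

theorem existsUnique_add_mem_box_iff (hw : 0 < w) (he : φ e = 2 * w) (hf : φ f = 0)
    (hψf : ψ f = 2) {p q : E} :
    ((∃! V, V ∈ AddSubgroup.closure {f, e} ∧ p + V ∈ box φ ψ w) ∧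
        q - p ∈ AddSubgroup.closure {f, e} ∧ q ∈ box φ ψ w) ↔
      q - p ∈ AddSubgroup.closure {f, e} ∧ q ∈ openBox φ ψ w :=
  existsUnique_add_mem_and_iff openBox_subset_box
    (fun _ hq hq' => exists_ne_zero_add_mem_box hw he hf hψf hq hq')
    (fun _ hq _ hW hqW => eq_zero_of_mem_openBox_of_add_mem_box he hf hψf hq hW hqW)

theorem eq_of_sub_mem_of_mem_openBox (he : φ e = 2 * w) (hf : φ f = 0) (hψf : ψ f = 2)
    {p q : E} (hp : p ∈ box φ ψ w) (hq : q ∈ openBox φ ψ w)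
    (hpq : q - p ∈ AddSubgroup.closure {f, e}) : q = p := by
  have := eq_zero_of_mem_openBox_of_add_mem_box he hf hψf hq (neg_mem hpq)
    (by rwa [neg_sub, add_sub_cancel])
  rwa [neg_eq_zero, sub_eq_zero] at this

end Box

-- `U1 s` and `U2 s` are the interiors of `F1 s` and `F2 s`.
def U1 (s : ℝ) : Set (ℝ × ℝ) :=
  openBox (-LinearMap.snd ℝ ℝ ℝ) (LinearMap.fst ℝ ℝ ℝ - LinearMap.snd ℝ ℝ ℝ) s

def U2 (s : ℝ) : Set (ℝ × ℝ) :=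
  openBox (LinearMap.fst ℝ ℝ ℝ) (LinearMap.fst ℝ ℝ ℝ + LinearMap.snd ℝ ℝ ℝ) s

section Coordinates

variable {s : ℝ}

theorem F1_eq_box (hs : 0 < s) :
    F1 s = box (-LinearMap.snd ℝ ℝ ℝ) (LinearMap.fst ℝ ℝ ℝ - LinearMap.snd ℝ ℝ ℝ) s := by
  ext ⟨x, y⟩
  simp only [F1, mem_box, mem_ofPred_eq, mem_Icc, LinearMap.neg_apply, LinearMap.sub_apply,
    LinearMap.fst_apply, LinearMap.snd_apply, Prod.smul_mk, smul_eq_mul, Prod.mk_add_mk,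
    mul_zero, zero_add, Prod.mk.injEq]
  constructor
  · rintro ⟨a, b, ⟨ha₁, ha₂⟩, ⟨hb₁, hb₂⟩, rfl, rfl⟩
    refine ⟨⟨?_, ?_⟩, ?_, ?_⟩ <;> nlinarith
  · rintro ⟨⟨h₁, h₂⟩, h₃, h₄⟩
    refine ⟨(x - y) / 2, y / (2 * s), ⟨by linarith, by linarith⟩,
      ⟨?_, ?_⟩, by field_simp; ring, by field_simp⟩
    · rw [le_div_iff₀ (by positivity)]; linarith
    · rw [div_le_iff₀ (by positivity)]; linarith

theorem F2_eq_box (hs : 0 < s) :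
    F2 s = box (LinearMap.fst ℝ ℝ ℝ) (LinearMap.fst ℝ ℝ ℝ + LinearMap.snd ℝ ℝ ℝ) s := by
  ext p
  rw [F2, F1_eq_box hs]
  constructor
  · rintro ⟨q, hq, rfl⟩
    simp only [mem_box, LinearMap.neg_apply, LinearMap.sub_apply, LinearMap.add_apply,
      LinearMap.fst_apply, LinearMap.snd_apply, Jrot] at hq ⊢
    refine ⟨⟨?_, ?_⟩, ?_, ?_⟩ <;> linarith
  · intro hp
    refine ⟨(p.2, -p.1), ?_, by simp [Jrot]⟩
    simp only [mem_box, LinearMap.neg_apply, LinearMap.sub_apply, LinearMap.add_apply,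
      LinearMap.fst_apply, LinearMap.snd_apply] at hp ⊢
    refine ⟨⟨?_, ?_⟩, ?_, ?_⟩ <;> linarith

theorem mem_F1 (hs : 0 < s) {p : ℝ × ℝ} :
    p ∈ F1 s ↔ (-s ≤ p.2 ∧ p.2 ≤ s) ∧ -1 ≤ p.1 - p.2 ∧ p.1 - p.2 ≤ 1 := by
  rw [F1_eq_box hs]
  simp only [mem_box, LinearMap.neg_apply, LinearMap.sub_apply, LinearMap.fst_apply,
    LinearMap.snd_apply, neg_le_neg_iff, neg_le]
  tauto

theorem mem_U1 {p : ℝ × ℝ} :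
    p ∈ U1 s ↔ (-s < p.2 ∧ p.2 < s) ∧ -1 < p.1 - p.2 ∧ p.1 - p.2 < 1 := by
  simp only [U1, mem_openBox, LinearMap.neg_apply, LinearMap.sub_apply, LinearMap.fst_apply,
    LinearMap.snd_apply, neg_lt_neg_iff, neg_lt]
  tauto

theorem mem_U2 {p : ℝ × ℝ} :
    p ∈ U2 s ↔ (-s < p.1 ∧ p.1 < s) ∧ -1 < p.1 + p.2 ∧ p.1 + p.2 < 1 := Iff.rfl

theorem mem_L1_iff {V : ℝ × ℝ} : V ∈ L1 s ↔ ∃ m n : ℤ, V = (2 * n + 2 * s * m, -(2 * s * m)) := by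
  rw [L1, AddSubgroup.mem_closure_pair]
  refine exists_comm.trans (exists_congr fun m => exists_congr fun n => ?_)
  simp only [eq_comm (b := V), Prod.smul_mk, zsmul_eq_mul, smul_zero, smul_neg, Prod.mk_add_mk,
    zero_add, Prod.ext_iff]
  constructor <;> rintro ⟨h₁, h₂⟩ <;> constructor <;> linarith

theorem mem_L2_iff {V : ℝ × ℝ} : V ∈ L2 s ↔ ∃ m n : ℤ, V = (2 * s * m, 2 * n + 2 * s * m) := by
  rw [L2, AddSubgroup.mem_closure_pair]
  refine exists_comm.trans (exists_congr fun m => exists_congr fun n => ?_)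
  simp only [eq_comm (b := V), Prod.smul_mk, zsmul_eq_mul, smul_zero, Prod.mk_add_mk,
    zero_add, Prod.ext_iff]
  constructor <;> rintro ⟨h₁, h₂⟩ <;> constructor <;> linarith

end Coordinates

section Dynamics

variable {s : ℝ}

theorem U1_subset_F1 (hs : 0 < s) : U1 s ⊆ F1 s := by
  rw [F1_eq_box hs]; exact openBox_subset_box

theorem U2_subset_F2 (hs : 0 < s) : U2 s ⊆ F2 s := by
  rw [F2_eq_box hs]; exact openBox_subset_box

theorem eq_of_mem_F1_of_mem_U1 (hs : 0 < s) {p q : ℝ × ℝ} (hp : p ∈ F1 s) (hq : q ∈ U1 s)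
    (hpq : q - p ∈ L1 s) : q = p := by
  rw [F1_eq_box hs] at hp
  exact eq_of_sub_mem_of_mem_openBox (by simp) (by simp) (by simp) hp hq hpq

theorem eq_of_mem_F2_of_mem_U2 (hs : 0 < s) {p q : ℝ × ℝ} (hp : p ∈ F2 s) (hq : q ∈ U2 s)
    (hpq : q - p ∈ L2 s) : q = p := by
  rw [F2_eq_box hs] at hp
  exact eq_of_sub_mem_of_mem_openBox (by simp) (by simp) (by simp) hp hq hpq

theorem step_iff (hs : 0 < s) {p q : ℝ × ℝ} :
    step s p q ↔ (p ∈ F1 s ∧ q - p ∈ L2 s ∧ q ∈ U2 s) ∨ (p ∈ F2 s ∧ q - p ∈ L1 s ∧ q ∈ U1 s) := by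
  rw [step, F1_eq_box hs, F2_eq_box hs, L1, L2,
    existsUnique_add_mem_box_iff hs (by simp) (by simp) (by simp),
    existsUnique_add_mem_box_iff hs (by simp) (by simp) (by simp)]
  rfl

/-- The disjuncts are the itineraries `F₁ → F₂ → F₁`, `F₁ → F₂ → F₂`, `F₁ → F₁ → F₂` and
`F₁ → F₁ → F₁`: on `F₁ ∩ F₂` either lattice may be used, and a step by `L₁` from a point of `F₁`
(or by `L₂` from a point of `F₂`) can only be trivial. -/
theorem fRel_add_iff (hs : 0 < s) {p V : ℝ × ℝ} (hp : p ∈ F1 s) :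
    fRel s p (p + V) ↔
      (∃ A ∈ L2 s, V - A ∈ L1 s ∧ p + A ∈ U2 s ∧ p + V ∈ U1 s) ∨
      (V ∈ L2 s ∧ p + V ∈ F1 s ∧ p + V ∈ U2 s) ∨
      (p ∈ U1 s ∧ p ∈ F2 s ∧ V ∈ L2 s ∧ p + V ∈ U2 s) ∨
      (p ∈ U1 s ∧ p ∈ F2 s ∧ V = 0) := by
  simp only [fRel, step_iff hs]
  constructor
  · rintro ⟨r, ⟨-, hrp, hr⟩ | ⟨hp₂, hrp, hr⟩, ⟨hr₁, hqr, hq⟩ | ⟨-, hqr, hq⟩⟩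
    · obtain rfl : p + V = r := eq_of_mem_F2_of_mem_U2 hs (U2_subset_F2 hs hr) hq hqr
      exact Or.inr (Or.inl ⟨by simpa using hrp, hr₁, hr⟩)
    · refine Or.inl ⟨r - p, hrp, ?_, by rwa [add_sub_cancel], hq⟩
      convert hqr using 1
      abel
    · obtain rfl : r = p := eq_of_mem_F1_of_mem_U1 hs hp hr hrp
      exact Or.inr (Or.inr (Or.inl ⟨hr, hp₂, by simpa using hqr, hq⟩))
    · obtain rfl : r = p := eq_of_mem_F1_of_mem_U1 hs hp hr hrp
      have := eq_of_mem_F1_of_mem_U1 hs hp hq hqr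
      exact Or.inr (Or.inr (Or.inr ⟨hr, hp₂, by simpa using this⟩))
  · rintro (⟨A, hA, hB, hr, hq⟩ | ⟨hV, hq₁, hq⟩ | ⟨hp₁, hp₂, hV, hq⟩ | ⟨hp₁, hp₂, rfl⟩)
    · refine ⟨p + A, Or.inl ⟨hp, by simpa using hA, hr⟩,
        Or.inr ⟨U2_subset_F2 hs hr, ?_, hq⟩⟩
      convert hB using 1
      abel
    · exact ⟨p + V, Or.inl ⟨hp, by simpa using hV, hq⟩, Or.inl ⟨hq₁, by simp, hq⟩⟩
    · exact ⟨p, Or.inr ⟨hp₂, by simp, hp₁⟩, Or.inl ⟨hp, by simpa using hV, hq⟩⟩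
    · exact ⟨p, Or.inr ⟨hp₂, by simp, hp₁⟩, Or.inr ⟨hp₂, by simp, by simpa using hp₁⟩⟩

end Dynamics

section Arithmetic

variable {s : ℝ}

theorem abs_le_two_of_abs_two_mul_lt (hs : 1/4 < s) {m : ℤ} (h : |2 * s * m| < 1 + 2 * s) :
    |m| ≤ 2 ∧ (1/2 < s → |m| ≤ 1) := by
  have hm : 2 * s * |(m : ℝ)| < 1 + 2 * s := by
    rwa [abs_mul, abs_of_pos (by linarith : (0 : ℝ) < 2 * s)] at h
  rw [← Int.cast_abs] at hm
  refine ⟨?_, fun hs' => ?_⟩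
  · by_contra! h3
    have : (3 : ℝ) ≤ ((|m| : ℤ) : ℝ) := by exact_mod_cast h3
    nlinarith
  · by_contra! h2
    have : (2 : ℝ) ≤ ((|m| : ℤ) : ℝ) := by exact_mod_cast h2
    nlinarith

theorem eq_three_fourths_or_eq_three_eighths_of_two_mul_eq_int (hs4 : 1/4 < s) (hs1 : s < 1)
    (h3 : s ≠ 1/3) (h2 : s ≠ 1/2) {d k : ℤ} (hd : 0 < d) (hd4 : d ≤ 4)
    (hd3 : 3 ≤ d → s < 1/2) (hk : 2 * s * d = k) : d = 2 ∧ s = 3/4 ∨ d = 4 ∧ s = 3/8 := by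
  interval_cases d <;> norm_num at hk hd3
  · have : 0 < k ∧ k < 2 := ⟨by exact_mod_cast (by linarith : (0 : ℝ) < k),
      by exact_mod_cast (by linarith : (k : ℝ) < 2)⟩
    obtain rfl : k = 1 := by omega
    exact absurd (by norm_num at hk; linarith) h2
  · have : 1 < k ∧ k < 4 := ⟨by exact_mod_cast (by linarith : (1 : ℝ) < k),
      by exact_mod_cast (by linarith : (k : ℝ) < 4)⟩
    obtain rfl | rfl : k = 2 ∨ k = 3 := by omega
    · exact absurd (by norm_num at hk; linarith) h2
    · exact Or.inl ⟨rfl, by norm_num at hk; linarith⟩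
  · have : 1 < k ∧ k < 3 := ⟨by exact_mod_cast (by linarith : (1 : ℝ) < k),
      by exact_mod_cast (by linarith : (k : ℝ) < 3)⟩
    obtain rfl : k = 2 := by omega
    exact absurd (by norm_num at hk; linarith) h3
  · have : 2 < k ∧ k < 4 := ⟨by exact_mod_cast (by linarith : (2 : ℝ) < k),
      by exact_mod_cast (by linarith : (k : ℝ) < 4)⟩
    obtain rfl : k = 3 := by omega
    exact Or.inr ⟨rfl, by norm_num at hk; linarith⟩

theorem eq_or_eq_neg_of_two_mul_sub_eq_int (hs4 : 1/4 < s) (hs1 : s < 1) (h3 : s ≠ 1/3)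
    (h2 : s ≠ 1/2) {m₁ m₂ k : ℤ} (hm₁ : |2 * s * m₁| < 1 + 2 * s)
    (hm₂ : |2 * s * m₂| < 1 + 2 * s) (hk : 2 * s * ((m₁ : ℝ) - m₂) = k) :
    m₁ = m₂ ∨ m₂ = -m₁ ∧ |2 * s * m₁| = 3/2 ∧ s ≤ 3/4 := by
  wlog h : m₂ < m₁ generalizing m₁ m₂ k
  · rcases lt_trichotomy m₁ m₂ with h' | rfl | h'
    · rcases this hm₂ hm₁ (k := -k) (by push_cast; linarith) h' with h'' | ⟨h'', habs, hs⟩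
      · exact Or.inl h''.symm
      · refine Or.inr ⟨by omega, ?_, hs⟩
        rw [h'', Int.cast_neg, mul_neg, abs_neg]
        exact habs
    · exact Or.inl rfl
    · exact absurd h' h
  obtain ⟨hb₁, hb₁'⟩ := abs_le_two_of_abs_two_mul_lt hs4 hm₁
  obtain ⟨hb₂, hb₂'⟩ := abs_le_two_of_abs_two_mul_lt hs4 hm₂
  rw [abs_le] at hb₁ hb₂
  have hd3 : 3 ≤ m₁ - m₂ → s < 1/2 := fun hd => by
    by_contra! hs'
    have hs' := lt_of_le_of_ne hs' (Ne.symm h2)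
    have := abs_le.1 (hb₁' hs')
    have := abs_le.1 (hb₂' hs')
    omega
  rcases eq_three_fourths_or_eq_three_eighths_of_two_mul_eq_int hs4 hs1 h3 h2 (d := m₁ - m₂)
    (by omega) (by omega) hd3 (by push_cast; exact hk) with ⟨hd, rfl⟩ | ⟨hd, rfl⟩
  · have := abs_le.1 (hb₁' (by norm_num))
    have := abs_le.1 (hb₂' (by norm_num))
    obtain ⟨rfl, rfl⟩ : m₁ = 1 ∧ m₂ = -1 := by omega
    norm_num
  · obtain ⟨rfl, rfl⟩ : m₁ = 2 ∧ m₂ = -2 := by omega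
    norm_num

theorem eq_three_or_eq_neg_three {x : ℝ} {k : ℤ} (hx : |x| = 3/2) (hk : 2 * x = k) :
    k = 3 ∨ k = -3 := by
  rcases (abs_eq (by norm_num)).1 hx with rfl | rfl
  · left; exact_mod_cast (by linarith : (k : ℝ) = 3)
  · right; exact_mod_cast (by linarith : (k : ℝ) = -3)

end Arithmetic

section Sharpness

variable {s : ℝ}

theorem convex_F1 (hs : 0 < s) : Convex ℝ (F1 s) := by
  rw [F1_eq_box hs]; exact convex_box

theorem eq_of_sub_mem_L1_of_sub_mem_L2 (hs4 : 1/4 < s) (hs1 : s < 1) (h3 : s ≠ 1/3)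
    (h2 : s ≠ 1/2) {t r : ℝ × ℝ} (ht : t ∈ U1 s) (hr : r ∈ U2 s) (h₁ : t - r ∈ L1 s)
    (h₂ : t - r ∈ L2 s) : t = r := by
  obtain ⟨a, b, hab⟩ := mem_L2_iff.1 h₂
  obtain ⟨c, e, hce⟩ := mem_L1_iff.1 h₁
  rw [mem_U1] at ht
  rw [mem_U2] at hr
  simp only [Prod.ext_iff, Prod.fst_sub, Prod.snd_sub] at hab hce
  have zero_of_eq_int (m k : ℤ) (hm : |2 * s * m| < 1 + 2 * s)
      (hk : 2 * s * ((m : ℝ) - (0 : ℤ)) = k) : m = 0 :=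
    (eq_or_eq_neg_of_two_mul_sub_eq_int hs4 hs1 h3 h2 hm (by simp; linarith) hk).elim
      id (fun h => by omega)
  obtain rfl : a = 0 := zero_of_eq_int a (e - b) (abs_lt.2 ⟨by linarith, by linarith⟩)
    (by push_cast; linarith)
  obtain rfl : c = 0 := neg_eq_zero.1 <| zero_of_eq_int (-c) (e + b)
    (abs_lt.2 ⟨by push_cast; linarith, by push_cast; linarith⟩) (by push_cast; linarith)
  ext <;> push_cast at hab hce <;> linarith

/-- For `A ∈ L₂` and `V - A ∈ L₁`: the points of `F₁` sent by `f′ₛ` to `p + A ∈ F₂` and then to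
`p + V ∈ F₁`. -/
def abSet (s : ℝ) (A V : ℝ × ℝ) : Set (ℝ × ℝ) := {p | p ∈ F1 s ∧ p + A ∈ U2 s ∧ p + V ∈ U1 s}

theorem convex_abSet (hs : 0 < s) (A V : ℝ × ℝ) : Convex ℝ (abSet s A V) :=
  (convex_F1 hs).inter ((convex_openBox.translate_preimage_left A).inter
    (convex_openBox.translate_preimage_left V))

theorem abs_lt_of_mem_abSet (hs : 0 < s) {A V p : ℝ × ℝ} (hp : p ∈ abSet s A V) :
    |A.1| < 1 + 2 * s ∧ |(V - A).2| < 1 + 2 * s := by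
  obtain ⟨hp, hr, ht⟩ := hp
  rw [mem_F1 hs] at hp
  rw [mem_U2] at hr
  rw [mem_U1] at ht
  simp only [Prod.fst_add, Prod.snd_add] at hr ht
  rw [Prod.snd_sub]
  exact ⟨abs_lt.2 ⟨by linarith, by linarith⟩, abs_lt.2 ⟨by linarith, by linarith⟩⟩

/-- Translating by `A₁` resp. `A₂` into the strip `|x| < s` puts `p₁` and `p₂` at opposite ends of
`F₁`; whatever the sign of `V.1 - V.2`, one of `p₁ + V`, `p₂ + V` then misses `U₁`. -/
theorem false_of_mem_abSet_of_fst_eq_neg (hs : 0 < s) (hs34 : s ≤ 3/4) {A₁ A₂ V p₁ p₂ : ℝ × ℝ}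
    (hp₁ : p₁ ∈ abSet s A₁ V) (hp₂ : p₂ ∈ abSet s A₂ V) (hA : A₂.1 = -A₁.1)
    (ha : |A₁.1| = 3/2) (hV : 1 ≤ |V.1 - V.2|) : False := by
  obtain ⟨hp₁, hr₁, ht₁⟩ := hp₁
  obtain ⟨hp₂, hr₂, ht₂⟩ := hp₂
  rw [mem_F1 hs] at hp₁ hp₂
  rw [mem_U2] at hr₁ hr₂
  rw [mem_U1] at ht₁ ht₂
  simp only [Prod.fst_add, Prod.snd_add] at hr₁ hr₂ ht₁ ht₂
  rcases (abs_eq (by norm_num)).1 ha with ha | ha <;>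
    rcases le_abs'.1 hV with hV | hV <;> linarith

theorem eq_of_mem_abSet (hs4 : 1/4 < s) (hs1 : s < 1) (h3 : s ≠ 1/3) (h2 : s ≠ 1/2)
    {A₁ A₂ V p₁ p₂ : ℝ × ℝ} (hA₁ : A₁ ∈ L2 s) (hA₂ : A₂ ∈ L2 s) (hB₁ : V - A₁ ∈ L1 s)
    (hB₂ : V - A₂ ∈ L1 s) (hp₁ : p₁ ∈ abSet s A₁ V) (hp₂ : p₂ ∈ abSet s A₂ V) : A₁ = A₂ := by
  have hs : 0 < s := by linarith
  obtain ⟨hA₁x, hB₁y⟩ := abs_lt_of_mem_abSet hs hp₁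
  obtain ⟨hA₂x, hB₂y⟩ := abs_lt_of_mem_abSet hs hp₂
  obtain ⟨m₁, n₁, rfl⟩ := mem_L2_iff.1 hA₁
  obtain ⟨m₂, n₂, rfl⟩ := mem_L2_iff.1 hA₂
  obtain ⟨m₁', n₁', hB₁⟩ := mem_L1_iff.1 hB₁
  obtain ⟨m₂', n₂', hB₂⟩ := mem_L1_iff.1 hB₂
  rw [hB₁] at hB₁y
  rw [hB₂] at hB₂y
  rw [← mul_neg, ← Int.cast_neg] at hB₁y hB₂y
  simp only [Prod.ext_iff, Prod.fst_sub, Prod.snd_sub] at hB₁ hB₂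
  have hk : 2 * s * ((m₁ : ℝ) - m₂) = ((n₂' - n₁' + (n₂ - n₁) : ℤ) : ℝ) := by
    push_cast; linarith
  have hl : 2 * s * (((-m₁' : ℤ) : ℝ) - ((-m₂' : ℤ) : ℝ)) = ((n₂ - n₁ - (n₂' - n₁') : ℤ) : ℝ) := by
    push_cast; linarith
  rcases eq_or_eq_neg_of_two_mul_sub_eq_int hs4 hs1 h3 h2 hA₁x hA₂x hk with
    rfl | ⟨hm, ha, hs34⟩ <;>
  rcases eq_or_eq_neg_of_two_mul_sub_eq_int hs4 hs1 h3 h2 hB₁y hB₂y hl with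
    hm' | ⟨hm', hb, -⟩
  · have := Int.cast_eq_zero.1 (hk.symm.trans (by simp))
    obtain rfl : m₁' = m₂' := by omega
    have := Int.cast_eq_zero.1 (hl.symm.trans (by simp))
    obtain rfl : n₁ = n₂ := by omega
    rfl
  -- the two integers sum to `2 (n₂ - n₁)`, so they cannot be `0` and `±3`
  · have := Int.cast_eq_zero.1 (hk.symm.trans (by simp))
    have := eq_three_or_eq_neg_three hb (by rw [← hl, hm']; push_cast; ring)
    omega
  · have := eq_three_or_eq_neg_three ha (by rw [← hk, hm]; push_cast; ring)
    have := Int.cast_eq_zero.1 (hl.symm.trans (by rw [hm']; simp))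
    omega
  · have hl3 := eq_three_or_eq_neg_three hb (by rw [← hl, hm']; push_cast; ring)
    refine (false_of_mem_abSet_of_fst_eq_neg hs hs34 hp₁ hp₂ (by rw [hm]; push_cast; ring) ha
      ?_).elim
    have hV : V.1 - V.2 = ((2 * (n₁' - n₁) - (n₂ - n₁ - (n₂' - n₁')) : ℤ) : ℝ) := by
      rw [hm'] at hl
      push_cast at hl ⊢
      linarith
    rw [hV, ← Int.cast_abs]
    exact_mod_cast Int.one_le_abs (by omega)

theorem setOf_fRel_of_mem_L2 (hs4 : 1/4 < s) (hs1 : s < 1) (h3 : s ≠ 1/3) (h2 : s ≠ 1/2)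
    {V : ℝ × ℝ} (hV : V ∈ L2 s) :
    {p | p ∈ F1 s ∧ fRel s p (p + V)} =
      {p | p ∈ F1 s ∧ p + V ∈ F1 s ∧ p + V ∈ U2 s} ∪ {p | V = 0 ∧ p ∈ U1 s ∧ p ∈ F2 s} := by
  have hs : 0 < s := by linarith
  ext p
  simp only [mem_ofPred_eq, mem_union]
  constructor
  · rintro ⟨hp, h⟩
    rcases (fRel_add_iff hs hp).1 h with ⟨A, hA, hB, hr, hq⟩ | h | ⟨hp₁, hp₂, -, hq⟩ | h
    · have hqr : p + V - (p + A) = V - A := by abel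
      have := eq_of_sub_mem_L1_of_sub_mem_L2 hs4 hs1 h3 h2 hq hr (hqr ▸ hB)
        (hqr ▸ (L2 s).sub_mem hV hA)
      exact Or.inl ⟨hp, U1_subset_F1 hs hq, this ▸ hr⟩
    · exact Or.inl ⟨hp, h.2⟩
    · have := eq_of_mem_F2_of_mem_U2 hs hp₂ hq (by simpa using hV)
      exact Or.inr ⟨by simpa using this, hp₁, hp₂⟩
    · exact Or.inr ⟨h.2.2, h.1, h.2.1⟩
  · rintro (⟨hp, hq⟩ | ⟨rfl, hp₁, hp₂⟩)
    · exact ⟨hp, (fRel_add_iff hs hp).2 (Or.inr (Or.inl ⟨hV, hq⟩))⟩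
    · exact ⟨U1_subset_F1 hs hp₁,
        (fRel_add_iff hs (U1_subset_F1 hs hp₁)).2 (Or.inr (Or.inr (Or.inr ⟨hp₁, hp₂, rfl⟩)))⟩

theorem setOf_fRel_of_not_mem_L2 (hs : 0 < s) {V : ℝ × ℝ} (hV : V ∉ L2 s) :
    {p | p ∈ F1 s ∧ fRel s p (p + V)} = {p | ∃ A ∈ L2 s, V - A ∈ L1 s ∧ p ∈ abSet s A V} := by
  ext p
  constructor
  · rintro ⟨hp, h⟩
    rcases (fRel_add_iff hs hp).1 h with ⟨A, hA, hB, hr, hq⟩ | ⟨hV', -⟩ | ⟨-, -, hV', -⟩ | ⟨-, -, rfl⟩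
    · exact ⟨A, hA, hB, hp, hr, hq⟩
    · exact absurd hV' hV
    · exact absurd hV' hV
    · exact absurd (L2 s).zero_mem hV
  · rintro ⟨A, hA, hB, hp, hr, hq⟩
    exact ⟨hp, (fRel_add_iff hs hp).2 (Or.inl ⟨A, hA, hB, hr, hq⟩)⟩

theorem convex_F1_inter_U2_union_U1_inter_F2 (hs : 0 < s) :
    Convex ℝ (F1 s ∩ U2 s ∪ U1 s ∩ F2 s) := by
  have hU1 : Convex ℝ (U1 s) := convex_openBox
  have hU2 : Convex ℝ (U2 s) := convex_openBox
  have hF2 : Convex ℝ (F2 s) := by rw [F2_eq_box hs]; exact convex_box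
  refine Convex.union_of_openSegment_subset ((convex_F1 hs).inter hU2) (hU1.inter hF2)
    fun x ⟨hx₁, hx₂⟩ y ⟨hy₁, hy₂⟩ z hz => Or.inl ⟨U1_subset_F1 hs ?_, ?_⟩
  · rw [F1_eq_box hs] at hx₁
    exact openSegment_subset_openBox hx₁ hy₁ hz
  · rw [F2_eq_box hs] at hy₂
    rw [openSegment_symm] at hz
    exact openSegment_subset_openBox hy₂ hx₂ hz

end Sharpness

theorem sharpness (s : ℝ) (hs : s ∈ Set.Icc (1/4 : ℝ) 1)
    (h4 : s ≠ 1/4) (h3 : s ≠ 1/3) (h2 : s ≠ 1/2) (h1 : s ≠ 1) :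
    ∀ V : ℝ × ℝ, Convex ℝ {p : ℝ × ℝ | p ∈ F1 s ∧ fRel s p (p + V)} := by
  intro V
  have hs4 : 1/4 < s := lt_of_le_of_ne hs.1 (Ne.symm h4)
  have hs1 : s < 1 := lt_of_le_of_ne hs.2 h1
  have hs0 : 0 < s := by linarith
  by_cases hV : V ∈ L2 s
  · rw [setOf_fRel_of_mem_L2 hs4 hs1 h3 h2 hV]
    rcases eq_or_ne V 0 with rfl | hV0
    · convert convex_F1_inter_U2_union_U1_inter_F2 hs0 using 1
      ext p
      simp only [add_zero, true_and, mem_union, mem_inter_iff, mem_ofPred_eq, and_self_left]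
    · simp only [hV0, false_and, ofPred_false, union_empty]
      exact (convex_F1 hs0).inter (((convex_F1 hs0).translate_preimage_left V).inter
        (convex_openBox.translate_preimage_left V))
  · rw [setOf_fRel_of_not_mem_L2 hs0 hV]
    rintro p ⟨A, hA, hB, hp⟩ q ⟨A', hA', hB', hq⟩ a b ha hb hab
    obtain rfl := eq_of_mem_abSet hs4 hs1 h3 h2 hA hA' hB hB' hp hq
    exact ⟨A, hA, hB, convex_abSet hs0 A V hp hq ha hb hab⟩
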